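/- arXiv:2206.10816 — 4 statements merged into one kernel-verified Lean document; each statement's English description precedes it below -/
import Mathlib

section
/- For gradient descent on overparameterized linear regression (n < p) with step size 1, starting from θ⁽⁰⁾ = 0 and loss ½‖Xθ − Y‖², the iterate after t steps equals θ⁽ᵗ⁾ = Xᵀ [I − (I − XXᵀ)ᵗ] (XXᵀ)⁻¹ Y, assuming XXᵀ is invertible. -/
/-!
Unrolling the recursion, the `t`-th iterate is `Xᵀ (∑_{i<t} (I − XXᵀ)ⁱ) Y`, and the geometric
sum telescopes: `(∑_{i<t} (I − A)ⁱ) A = I − (I − A)ᵗ`, so for invertible `A = XXᵀ` it equals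
`(I − (I − A)ᵗ) A⁻¹`.
-/

open Matrix Finset

theorem gradientDescent_eq_geom_sum {m ι R : Type*} [Fintype m] [Fintype ι] [DecidableEq m]
    [CommRing R] (X : Matrix m ι R) (Y : m → R) (θ : ℕ → ι → R) (h0 : θ 0 = 0)
    (hstep : ∀ k, θ (k + 1) = θ k - Xᵀ *ᵥ (X *ᵥ θ k - Y)) (t : ℕ) :
    θ t = Xᵀ *ᵥ ((∑ i ∈ range t, (1 - X * Xᵀ) ^ i) *ᵥ Y) := by
  induction t with
  | zero => simp [h0]
  | succ k ih =>
    rw [hstep, ih, geom_sum_succ, add_mulVec, one_mulVec, sub_mul, one_mul, sub_mulVec,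
      ← mulVec_mulVec, ← mulVec_mulVec, mulVec_add, mulVec_sub, mulVec_sub]
    abel

theorem Matrix.geom_sum_one_sub_eq_mul_inv {m R : Type*} [Fintype m] [DecidableEq m]
    [CommRing R] (A : Matrix m m R) (hA : IsUnit A.det) (t : ℕ) :
    ∑ i ∈ range t, (1 - A) ^ i = (1 - (1 - A) ^ t) * A⁻¹ := by
  rw [← geom_sum_mul_neg, sub_sub_cancel, mul_nonsing_inv_cancel_right _ _ hA]

theorem overparam_gd_trajectory_general {n p : ℕ}
    (X : Matrix (Fin n) (Fin p) ℝ) (Y : Fin n → ℝ)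
    (hinv : IsUnit (X * Xᵀ))
    (θ : ℕ → (Fin p → ℝ))
    (h0 : θ 0 = 0)
    (hstep : ∀ k, θ (k + 1) = θ k - Xᵀ *ᵥ (X *ᵥ θ k - Y))
    (t : ℕ) :
    θ t = (Xᵀ * (1 - (1 - X * Xᵀ) ^ t) * (X * Xᵀ)⁻¹) *ᵥ Y := by
  rw [gradientDescent_eq_geom_sum X Y θ h0 hstep t,
    geom_sum_one_sub_eq_mul_inv _ ((isUnit_iff_isUnit_det _).mp hinv), mulVec_mulVec,
    Matrix.mul_assoc]

/-- Trajectory of gradient descent (step size 1, loss ½‖Xθ − Y‖²) for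
overparameterized linear regression (`n < p`), starting from `θ 0 = 0`:
`θ t = Xᵀ [I − (I − XXᵀ)ᵗ] (XXᵀ)⁻¹ Y`. -/
theorem overparam_gd_trajectory {n p : ℕ} (hnp : n < p)
    (X : Matrix (Fin n) (Fin p) ℝ) (Y : Fin n → ℝ)
    (hinv : IsUnit (X * Xᵀ))
    (θ : ℕ → (Fin p → ℝ))
    (h0 : θ 0 = 0)
    (hstep : ∀ k, θ (k + 1) = θ k - Xᵀ *ᵥ (X *ᵥ θ k - Y))
    (t : ℕ) :
    θ t = (Xᵀ * (1 - (1 - X * Xᵀ) ^ t) * (X * Xᵀ)⁻¹) *ᵥ Y :=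
  overparam_gd_trajectory_general X Y hinv θ h0 hstep t
end

section
/- For gradient descent on underparameterized linear regression (n > p) with step size 1, starting from θ⁽⁰⁾ = 0 and loss ½‖Xθ − Y‖², the iterate after t steps equals θ⁽ᵗ⁾ = Xᵀ [I − (I − XXᵀ)ᵗ] X (XᵀX)⁻² Xᵀ Y, assuming XᵀX is invertible. -/
/-!
With `A = XᵀX`, one gradient step is the affine map `θ ↦ (1 - A) θ + XᵀY`, so from `θ 0 = 0`
the iterate is the geometric sum `θ t = ∑_{i<t} (1 - A)ⁱ XᵀY = (1 - (1 - A)ᵗ) A⁻¹ XᵀY`.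
The push-through identity `Xᵀ (1 - XXᵀ)ᵗ = (1 - XᵀX)ᵗ Xᵀ` and `A A⁻¹ = 1` turn
`Xᵀ (1 - (1 - XXᵀ)ᵗ) X A⁻² Xᵀ` into `(1 - (1 - A)ᵗ) A⁻¹ Xᵀ`.
-/

open Matrix Finset

namespace Matrix

variable {m n ι R : Type*} [Fintype n] [Fintype ι] [DecidableEq ι]

theorem mul_pow_eq_pow_mul_of_mul_eq [Fintype m] [DecidableEq m] [DecidableEq n] [Semiring R]
    {B : Matrix m n R} {C : Matrix n n R} {D : Matrix m m R} (h : B * C = D * B) (k : ℕ) :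
    B * C ^ k = D ^ k * B := by
  induction k with
  | zero => simp
  | succ k ih => rw [pow_succ, ← Matrix.mul_assoc, ih, Matrix.mul_assoc, h, pow_succ,
      Matrix.mul_assoc]

theorem mulVec_eq_geom_sum_of_affine_recurrence [Semiring R] (L : Matrix ι ι R) (b : ι → R)
    (v : ℕ → ι → R) (h0 : v 0 = 0) (hstep : ∀ k, v (k + 1) = L *ᵥ v k + b) (k : ℕ) :
    v k = (∑ i ∈ range k, L ^ i) *ᵥ b := by
  induction k with
  | zero => simp [h0]
  | succ k ih => rw [hstep, ih, mulVec_mulVec, geom_sum_succ, add_mulVec, one_mulVec]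

theorem geom_sum_one_sub_eq [CommRing R] {A : Matrix ι ι R} (hA : IsUnit A.det) (k : ℕ) :
    ∑ i ∈ range k, (1 - A) ^ i = (1 - (1 - A) ^ k) * A⁻¹ := by
  rw [← geom_sum_mul_neg, sub_sub_cancel, mul_nonsing_inv_cancel_right _ _ hA]

end Matrix

theorem underparam_gd_trajectory_general {n p : ℕ}
    (X : Matrix (Fin n) (Fin p) ℝ) (Y : Fin n → ℝ)
    (hinv : IsUnit (Xᵀ * X))
    (θ : ℕ → (Fin p → ℝ))
    (h0 : θ 0 = 0)
    (hstep : ∀ k, θ (k + 1) = θ k - Xᵀ *ᵥ (X *ᵥ θ k - Y))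
    (t : ℕ) :
    θ t = (Xᵀ * (1 - (1 - X * Xᵀ) ^ t) * X * ((Xᵀ * X)⁻¹ ^ 2) * Xᵀ) *ᵥ Y := by
  set A := Xᵀ * X with hA
  have hdet : IsUnit A.det := (isUnit_iff_isUnit_det A).mp hinv
  have haffine : ∀ k, θ (k + 1) = (1 - A) *ᵥ θ k + Xᵀ *ᵥ Y := fun k => by
    rw [hstep, mulVec_sub, mulVec_mulVec, sub_mulVec, one_mulVec]
    abel
  have hpush : Xᵀ * (1 - (1 - X * Xᵀ) ^ t) = (1 - (1 - A) ^ t) * Xᵀ := by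
    have h : Xᵀ * (1 - X * Xᵀ) = (1 - A) * Xᵀ := by
      rw [Matrix.mul_sub, Matrix.sub_mul, Matrix.mul_assoc]
      simp
    rw [Matrix.mul_sub, Matrix.sub_mul, mul_pow_eq_pow_mul_of_mul_eq h]
    simp
  rw [mulVec_eq_geom_sum_of_affine_recurrence _ _ θ h0 haffine, geom_sum_one_sub_eq hdet,
    mulVec_mulVec, hpush, Matrix.mul_assoc _ Xᵀ X, ← hA, sq, ← Matrix.mul_assoc,
    mul_nonsing_inv_cancel_right _ _ hdet]

/-- Trajectory of gradient descent (step size 1, loss ½‖Xθ − Y‖²) for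
underparameterized linear regression (`n > p`), starting from `θ 0 = 0`:
`θ t = Xᵀ [I − (I − XXᵀ)ᵗ] X (XᵀX)⁻² Xᵀ Y`. -/
theorem underparam_gd_trajectory {n p : ℕ} (hnp : n > p)
    (X : Matrix (Fin n) (Fin p) ℝ) (Y : Fin n → ℝ)
    (hinv : IsUnit (Xᵀ * X))
    (θ : ℕ → (Fin p → ℝ))
    (h0 : θ 0 = 0)
    (hstep : ∀ k, θ (k + 1) = θ k - Xᵀ *ᵥ (X *ᵥ θ k - Y))
    (t : ℕ) :
    θ t = (Xᵀ * (1 - (1 - X * Xᵀ) ^ t) * X * ((Xᵀ * X)⁻¹ ^ 2) * Xᵀ) *ᵥ Y :=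
  underparam_gd_trajectory_general X Y hinv θ h0 hstep t
end

section
/- The function e(x) = (1 − (1 − x)ᵗ)/x on (0,1) has derivative bounded in absolute value by t(t−1); in particular e is t²-Lipschitz on (0,1). -/
/-!
Away from `x = 0`, `(1 - (1 - x) ^ t) / x` is the geometric sum `∑ k < t, (1 - x) ^ k`, so its
derivative is `-∑ k < t, k (1 - x) ^ (k - 1)`. For `x ∈ (0, 1)` every term has absolute value at
most `k ≤ t - 1`, which gives the bound `t (t - 1) ≤ t²`; the mean value theorem on the convex
set `(0, 1)` turns it into the Lipschitz constant.
-/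

open Finset

lemma one_sub_one_sub_pow_div_eq_geom_sum (t : ℕ) {x : ℝ} (hx : x ≠ 0) :
    (1 - (1 - x) ^ t) / x = ∑ k ∈ range t, (1 - x) ^ k := by
  rw [div_eq_iff hx, ← geom_sum_mul_neg, sub_sub_cancel]

lemma hasDerivAt_one_sub_one_sub_pow_div (t : ℕ) {x : ℝ} (hx : x ≠ 0) :
    HasDerivAt (fun x : ℝ => (1 - (1 - x) ^ t) / x)
      (-∑ k ∈ range t, (k : ℝ) * (1 - x) ^ (k - 1)) x := by
  have hgeom : HasDerivAt (fun x : ℝ => ∑ k ∈ range t, (1 - x) ^ k)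
      (-∑ k ∈ range t, (k : ℝ) * (1 - x) ^ (k - 1)) x := by
    rw [← sum_neg_distrib]
    refine HasDerivAt.fun_sum fun k _ => ?_
    simpa using ((hasDerivAt_id x).const_sub 1).fun_pow k
  refine hgeom.congr_of_eventuallyEq ?_
  filter_upwards [isOpen_ne.mem_nhds hx] with y hy
  exact one_sub_one_sub_pow_div_eq_geom_sum t hy

lemma abs_sum_range_mul_pow_pred_le (t : ℕ) {y : ℝ} (hy : |y| ≤ 1) :
    |∑ k ∈ range t, (k : ℝ) * y ^ (k - 1)| ≤ t * (t - 1) := by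
  calc |∑ k ∈ range t, (k : ℝ) * y ^ (k - 1)|
      ≤ ∑ k ∈ range t, |(k : ℝ) * y ^ (k - 1)| := abs_sum_le_sum_abs _ _
    _ ≤ ∑ _k ∈ range t, ((t : ℝ) - 1) := by
        refine sum_le_sum fun k hk => ?_
        have hkt : (k : ℝ) ≤ t - 1 := by
          rw [le_sub_iff_add_le]
          exact_mod_cast mem_range.mp hk
        rw [abs_mul, Nat.abs_cast, abs_pow]
        calc (k : ℝ) * |y| ^ (k - 1) ≤ k * 1 := by gcongr; exact pow_le_one₀ (abs_nonneg y) hy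
          _ ≤ t - 1 := by rwa [mul_one]
    _ = t * (t - 1) := by rw [sum_const, card_range, nsmul_eq_mul]

theorem e_deriv_bound_and_lipschitz_general (t : ℕ) :
    (∀ x ∈ Set.Ioo (0 : ℝ) 1,
      |deriv (fun x : ℝ => (1 - (1 - x) ^ t) / x) x| ≤ (t : ℝ) * ((t : ℝ) - 1)) ∧
    LipschitzOnWith ((t : NNReal) ^ 2)
      (fun x : ℝ => (1 - (1 - x) ^ t) / x) (Set.Ioo (0 : ℝ) 1) := by
  set e' : ℝ → ℝ := fun x => -∑ k ∈ range t, (k : ℝ) * (1 - x) ^ (k - 1)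
  have hderiv : ∀ x ∈ Set.Ioo (0 : ℝ) 1,
      HasDerivAt (fun x : ℝ => (1 - (1 - x) ^ t) / x) (e' x) x :=
    fun x hx => hasDerivAt_one_sub_one_sub_pow_div t hx.1.ne'
  have hbound : ∀ x ∈ Set.Ioo (0 : ℝ) 1, |e' x| ≤ t * (t - 1) := fun x hx => by
    rw [abs_neg]
    exact abs_sum_range_mul_pow_pred_le t (abs_le.2 ⟨by linarith [hx.2], by linarith [hx.1]⟩)
  refine ⟨fun x hx => (hderiv x hx).deriv ▸ hbound x hx, ?_⟩
  refine (convex_Ioo 0 1).lipschitzOnWith_of_nnnorm_hasDerivWithin_le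
    (fun x hx => (hderiv x hx).hasDerivWithinAt) fun x hx => ?_
  rw [← NNReal.coe_le_coe, coe_nnnorm, Real.norm_eq_abs, NNReal.coe_pow, NNReal.coe_natCast]
  calc |e' x| ≤ t * (t - 1) := hbound x hx
    _ ≤ (t : ℝ) ^ 2 := by nlinarith

/-- The function `e(x) = (1 − (1 − x)ᵗ)/x` on `(0,1)` has derivative bounded in
absolute value by `t(t−1)`; in particular `e` is `t²`-Lipschitz on `(0,1)`. -/
theorem e_deriv_bound_and_lipschitz (t : ℕ) (ht : 2 ≤ t) :
    (∀ x ∈ Set.Ioo (0 : ℝ) 1,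
      |deriv (fun x : ℝ => (1 - (1 - x) ^ t) / x) x| ≤ (t : ℝ) * ((t : ℝ) - 1)) ∧
    LipschitzOnWith ((t : NNReal) ^ 2)
      (fun x : ℝ => (1 - (1 - x) ^ t) / x) (Set.Ioo (0 : ℝ) 1) :=
  e_deriv_bound_and_lipschitz_general t
end

section
/- Let M be an n×d real matrix with n > d and singular values σ₁ ≥ … ≥ σ_d > 0, and let H = [I − (I − (λ/n)MᵀM)ᵗ](MᵀM)⁻¹Mᵀ where λ > 0 satisfies (λ/n)σ₁² ≤ 1. Then every singular value of H is at most the corresponding singular value of (MᵀM)⁻¹Mᵀ; in particular ‖H‖_F ≤ ‖(MᵀM)⁻¹Mᵀ‖_F and ‖H‖ ≤ ‖(MᵀM)⁻¹Mᵀ‖ = 1/σ_d. -/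
open Matrix
open scoped Matrix.Norms.L2Operator MatrixOrder

/-!
Put `A = MᵀM` and `c = λ/n`. Then `G = (MᵀM)⁻¹Mᵀ` satisfies `GGᵀ = A⁻¹`, and `H = K G` with
`K = 1 - (1 - cA)ᵗ` a function of `A`, so `GGᵀ - HHᵀ = A⁻¹ - K A⁻¹ K` is `f(A)` for
`f(x) = x⁻¹ (1 - (1 - (1 - cx)ᵗ)²)`. The bounds on `‖Mv‖` place the spectrum of `A` in
`[σ_d², σ₁²] ⊆ (0, 1/c]`, where `0 ≤ (1 - cx)ᵗ ≤ 1` and hence `f ≥ 0`. The Loewner inequality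
`HHᵀ ≤ GGᵀ` gives the trace and operator-norm comparisons, because `‖X‖ ≤ C ↔ XXᵀ ≤ C²`.
Finally `GGᵀ = A⁻¹ ≤ σ_d⁻²` gives `‖G‖ ≤ 1/σ_d`, and `G M v = v` for a vector with
`‖Mv‖ = σ_d ‖v‖` gives the reverse inequality.
-/

lemma inv_sub_mul_inv_mul_nonneg {x y : ℝ} (hx : 0 ≤ x) (hy₀ : 0 ≤ y) (hy₁ : y ≤ 1) (t : ℕ) :
    0 ≤ x⁻¹ - (1 - (1 - y) ^ t) * x⁻¹ * (1 - (1 - y) ^ t) := by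
  have hq₀ : 0 ≤ (1 - y) ^ t := pow_nonneg (by linarith) t
  have hq₁ : (1 - y) ^ t ≤ 1 := pow_le_one₀ (by linarith) (by linarith)
  have key : x⁻¹ - (1 - (1 - y) ^ t) * x⁻¹ * (1 - (1 - y) ^ t)
      = x⁻¹ * ((1 - y) ^ t * (2 - (1 - y) ^ t)) := by ring
  rw [key]
  exact mul_nonneg (inv_nonneg.mpr hx) (mul_nonneg hq₀ (by linarith))

namespace Matrix

variable {m k : Type*} [Fintype m]

lemma norm_toLp_sq_eq_dotProduct (x : m → ℝ) : ‖WithLp.toLp 2 x‖ ^ 2 = x ⬝ᵥ x := by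
  rw [EuclideanSpace.real_norm_sq_eq]
  simp [dotProduct, sq]

lemma dotProduct_algebraMap_mulVec [DecidableEq m] (r : ℝ) (x : m → ℝ) :
    x ⬝ᵥ (algebraMap ℝ (Matrix m m ℝ) r *ᵥ x) = r * ‖WithLp.toLp 2 x‖ ^ 2 := by
  rw [Algebra.algebraMap_eq_smul_one, smul_mulVec, one_mulVec, dotProduct_smul,
    norm_toLp_sq_eq_dotProduct, smul_eq_mul]

lemma isHermitian_transpose_mul_self (M : Matrix m k ℝ) : (Mᵀ * M).IsHermitian :=
  isHermitian_conjTranspose_mul_self M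

lemma isHermitian_algebraMap [DecidableEq m] (r : ℝ) :
    (algebraMap ℝ (Matrix m m ℝ) r).IsHermitian :=
  IsSelfAdjoint.algebraMap _ (IsSelfAdjoint.all r)

lemma le_iff_dotProduct_mulVec_le {A B : Matrix m m ℝ} (hA : A.IsHermitian)
    (hB : B.IsHermitian) : A ≤ B ↔ ∀ x, x ⬝ᵥ (A *ᵥ x) ≤ x ⬝ᵥ (B *ᵥ x) := by
  simp only [le_iff, posSemidef_iff_dotProduct_mulVec, hB.sub hA, true_and, star_trivial,
    sub_mulVec, dotProduct_sub, sub_nonneg]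

variable [Fintype k]

lemma dotProduct_transpose_mul_self_mulVec (M : Matrix m k ℝ) (x : k → ℝ) :
    x ⬝ᵥ ((Mᵀ * M) *ᵥ x) = ‖WithLp.toLp 2 (M *ᵥ x)‖ ^ 2 := by
  rw [norm_toLp_sq_eq_dotProduct, ← mulVec_mulVec, dotProduct_mulVec, vecMul_transpose]

lemma trace_mul_transpose_self (H : Matrix k m ℝ) :
    (H * Hᵀ).trace = ∑ i, ∑ j, H i j ^ 2 := by
  simp [trace, mul_apply, sq]

lemma l2_opNorm_le_iff [DecidableEq k] (A : Matrix m k ℝ) {C : ℝ} (hC : 0 ≤ C) :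
    ‖A‖ ≤ C ↔ ∀ x, ‖WithLp.toLp 2 (A *ᵥ x)‖ ≤ C * ‖WithLp.toLp 2 x‖ := by
  rw [l2_opNorm_def, ContinuousLinearMap.opNorm_le_iff hC,
    (WithLp.equiv 2 (k → ℝ)).forall_congr_left]
  rfl

lemma transpose_mul_self_le_algebraMap_iff [DecidableEq k] (M : Matrix m k ℝ) {C : ℝ}
    (hC : 0 ≤ C) :
    Mᵀ * M ≤ algebraMap ℝ (Matrix k k ℝ) (C ^ 2) ↔ ‖M‖ ≤ C := by
  rw [l2_opNorm_le_iff M hC, le_iff_dotProduct_mulVec_le (isHermitian_transpose_mul_self M)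
    (isHermitian_algebraMap _)]
  refine forall_congr' fun x => ?_
  rw [dotProduct_transpose_mul_self_mulVec, dotProduct_algebraMap_mulVec, ← mul_pow,
    sq_le_sq₀ (norm_nonneg _) (by positivity)]

section Norm

variable [DecidableEq m] [DecidableEq k]

lemma mul_transpose_self_le_algebraMap_iff (M : Matrix k m ℝ) {C : ℝ} (hC : 0 ≤ C) :
    M * Mᵀ ≤ algebraMap ℝ (Matrix k k ℝ) (C ^ 2) ↔ ‖M‖ ≤ C := by
  simpa [← conjTranspose_eq_transpose_of_trivial, l2_opNorm_conjTranspose] using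
    transpose_mul_self_le_algebraMap_iff Mᵀ hC

lemma l2_opNorm_le_of_mul_transpose_le {G H : Matrix k m ℝ} (h : H * Hᵀ ≤ G * Gᵀ) :
    ‖H‖ ≤ ‖G‖ :=
  (mul_transpose_self_le_algebraMap_iff H (norm_nonneg G)).mp <|
    h.trans <| (mul_transpose_self_le_algebraMap_iff G (norm_nonneg G)).mpr le_rfl

lemma inv_le_l2_opNorm_of_mul_eq_one {G : Matrix k m ℝ} {M : Matrix m k ℝ} (hGM : G * M = 1)
    {σ : ℝ} (hσ : 0 < σ) {v : k → ℝ} (hv : v ≠ 0)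
    (h : ‖WithLp.toLp 2 (M *ᵥ v)‖ = σ * ‖WithLp.toLp 2 v‖) : σ⁻¹ ≤ ‖G‖ := by
  have hv_pos : 0 < ‖WithLp.toLp 2 v‖ := by simpa using hv
  have key : ‖WithLp.toLp 2 v‖ ≤ ‖G‖ * (σ * ‖WithLp.toLp 2 v‖) :=
    calc ‖WithLp.toLp 2 v‖ = ‖WithLp.toLp 2 (G *ᵥ (M *ᵥ v))‖ := by
          rw [mulVec_mulVec, hGM, one_mulVec]
      _ ≤ ‖G‖ * ‖WithLp.toLp 2 (M *ᵥ v)‖ := (l2_opNorm_le_iff G (norm_nonneg G)).mp le_rfl _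
      _ = ‖G‖ * (σ * ‖WithLp.toLp 2 v‖) := by rw [h]
  rw [inv_le_iff_one_le_mul₀ hσ]
  nlinarith

end Norm

lemma algebraMap_sq_le_transpose_mul_self [DecidableEq k] (M : Matrix m k ℝ) {σ : ℝ}
    (hσ : 0 ≤ σ) (h : ∀ v, σ * ‖WithLp.toLp 2 v‖ ≤ ‖WithLp.toLp 2 (M *ᵥ v)‖) :
    algebraMap ℝ (Matrix k k ℝ) (σ ^ 2) ≤ Mᵀ * M := by
  rw [le_iff_dotProduct_mulVec_le (isHermitian_algebraMap _) (isHermitian_transpose_mul_self M)]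
  intro v
  rw [dotProduct_transpose_mul_self_mulVec, dotProduct_algebraMap_mulVec, ← mul_pow]
  exact pow_le_pow_left₀ (by positivity) (h v) 2

lemma transpose_mul_self_le_algebraMap_sq [DecidableEq k] (M : Matrix m k ℝ) {b : ℝ}
    (h : ∀ v, ‖WithLp.toLp 2 (M *ᵥ v)‖ ≤ b * ‖WithLp.toLp 2 v‖) :
    Mᵀ * M ≤ algebraMap ℝ (Matrix k k ℝ) (b ^ 2) := by
  rw [le_iff_dotProduct_mulVec_le (isHermitian_transpose_mul_self M) (isHermitian_algebraMap _)]
  intro v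
  rw [dotProduct_transpose_mul_self_mulVec, dotProduct_algebraMap_mulVec, ← mul_pow]
  exact pow_le_pow_left₀ (norm_nonneg _) (h v) 2

lemma spectrum_transpose_mul_self_subset_Icc [DecidableEq k] (M : Matrix m k ℝ) {σ b : ℝ}
    (hσ : 0 ≤ σ)
    (h : ∀ v, σ * ‖WithLp.toLp 2 v‖ ≤ ‖WithLp.toLp 2 (M *ᵥ v)‖ ∧
      ‖WithLp.toLp 2 (M *ᵥ v)‖ ≤ b * ‖WithLp.toLp 2 v‖) :
    spectrum ℝ (Mᵀ * M) ⊆ Set.Icc (σ ^ 2) (b ^ 2) := by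
  have hM : IsSelfAdjoint (Mᵀ * M) := isHermitian_transpose_mul_self M
  intro x hx
  exact ⟨(algebraMap_le_iff_le_spectrum hM).mp
      (algebraMap_sq_le_transpose_mul_self M hσ fun v => (h v).1) x hx,
    (le_algebraMap_iff_spectrum_le hM).mp
      (transpose_mul_self_le_algebraMap_sq M fun v => (h v).2) x hx⟩

section FunctionalCalculus

variable [DecidableEq k] {A : Matrix k k ℝ}

lemma cfc_inv_eq_nonsing_inv (hA : IsSelfAdjoint A) (hunit : IsUnit A) :
    cfc (fun x : ℝ => x⁻¹) A = A⁻¹ := by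
  rw [nonsing_inv_eq_ringInverse, cfc_ringInverse_id A hunit hA]

lemma cfc_one_sub_one_sub_mul_pow (hA : IsSelfAdjoint A) (c : ℝ) (t : ℕ) :
    cfc (fun x => 1 - (1 - c * x) ^ t) A = 1 - (1 - c • A) ^ t := by
  rw [cfc_sub .., cfc_const_one ℝ A, cfc_pow .., cfc_sub .., cfc_const_one ℝ A, cfc_const_mul ..,
    cfc_id' ..]

lemma posSemidef_inv_sub_mul_inv_mul (hA : IsSelfAdjoint A) {c : ℝ} (hc : 0 ≤ c)
    (hspec : ∀ x ∈ spectrum ℝ A, 0 < x ∧ c * x ≤ 1) (t : ℕ) :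
    (A⁻¹ - (1 - (1 - c • A) ^ t) * A⁻¹ * (1 - (1 - c • A) ^ t)).PosSemidef := by
  have hunit : IsUnit A := (spectrum.zero_notMem_iff ℝ).mp fun h0 => (hspec 0 h0).1.false
  have hcont (f : ℝ → ℝ) : ContinuousOn f (spectrum ℝ A) := A.finite_spectrum.continuousOn f
  rw [← cfc_inv_eq_nonsing_inv hA hunit, ← cfc_one_sub_one_sub_mul_pow hA,
    ← cfc_mul _ _ A (hcont _) (hcont _), ← cfc_mul _ _ A (hcont _) (hcont _),
    ← cfc_sub _ _ A (hcont _) (hcont _), ← nonneg_iff_posSemidef]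
  exact cfc_nonneg fun x hx => inv_sub_mul_inv_mul_nonneg (hspec x hx).1.le
    (mul_nonneg hc (hspec x hx).1.le) (hspec x hx).2 t

end FunctionalCalculus

section LeftPseudoinverse

variable [DecidableEq k] (M : Matrix m k ℝ)

/-- The Moore–Penrose pseudoinverse when `M` has full column rank (otherwise `(MᵀM)⁻¹ = 0`). -/
noncomputable def leftPinv : Matrix k m ℝ := (Mᵀ * M)⁻¹ * Mᵀ

variable {M}

lemma leftPinv_mul_self (hM : IsUnit (Mᵀ * M)) : leftPinv M * M = 1 := by
  rw [leftPinv, Matrix.mul_assoc, nonsing_inv_mul _ ((isUnit_iff_isUnit_det _).mp hM)]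

lemma leftPinv_mul_transpose_leftPinv (hM : IsUnit (Mᵀ * M)) :
    leftPinv M * (leftPinv M)ᵀ = (Mᵀ * M)⁻¹ := by
  have hsymm : ((Mᵀ * M)⁻¹)ᵀ = (Mᵀ * M)⁻¹ := by
    rw [transpose_nonsing_inv, transpose_mul, transpose_transpose]
  rw [leftPinv, transpose_mul, transpose_transpose, hsymm, Matrix.mul_assoc,
    ← Matrix.mul_assoc Mᵀ, nonsing_inv_mul_cancel_left _ _ ((isUnit_iff_isUnit_det _).mp hM)]

lemma l2_opNorm_leftPinv_le [DecidableEq m] (hM : IsUnit (Mᵀ * M)) {σ : ℝ} (hσ : 0 < σ)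
    (h : ∀ v, σ * ‖WithLp.toLp 2 v‖ ≤ ‖WithLp.toLp 2 (M *ᵥ v)‖) :
    ‖leftPinv M‖ ≤ σ⁻¹ := by
  have hA : IsSelfAdjoint (Mᵀ * M) := isHermitian_transpose_mul_self M
  have hspec : ∀ x ∈ spectrum ℝ (Mᵀ * M), σ ^ 2 ≤ x :=
    (algebraMap_le_iff_le_spectrum hA).mp (algebraMap_sq_le_transpose_mul_self M hσ.le h)
  rw [← mul_transpose_self_le_algebraMap_iff _ (inv_nonneg.mpr hσ.le),
    leftPinv_mul_transpose_leftPinv hM, ← cfc_inv_eq_nonsing_inv hA hM, inv_pow]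
  exact cfc_le_algebraMap _ _ _ (fun x hx => inv_anti₀ (by positivity) (hspec x hx))
    ((Mᵀ * M).finite_spectrum.continuousOn _) hA

end LeftPseudoinverse

end Matrix

theorem gd_H_singular_value_bounds_general {n d : ℕ}
    (M : Matrix (Fin n) (Fin d) ℝ) (hM : IsUnit (Mᵀ * M))
    (σ₁ σd : ℝ) (hσd : 0 < σd)
    (hbound : ∀ v : Fin d → ℝ,
      σd * ‖(WithLp.equiv 2 (Fin d → ℝ)).symm v‖ ≤
        ‖(WithLp.equiv 2 (Fin n → ℝ)).symm (M *ᵥ v)‖ ∧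
      ‖(WithLp.equiv 2 (Fin n → ℝ)).symm (M *ᵥ v)‖ ≤
        σ₁ * ‖(WithLp.equiv 2 (Fin d → ℝ)).symm v‖)
    (hattain : ∃ v : Fin d → ℝ, v ≠ 0 ∧
      ‖(WithLp.equiv 2 (Fin n → ℝ)).symm (M *ᵥ v)‖ =
        σd * ‖(WithLp.equiv 2 (Fin d → ℝ)).symm v‖)
    (lam : ℝ) (hlam : 0 < lam) (hstep : lam / n * σ₁ ^ 2 ≤ 1) (t : ℕ)
    (H G : Matrix (Fin d) (Fin n) ℝ)
    (hH : H = (1 - (1 - (lam / n) • (Mᵀ * M)) ^ t) * (Mᵀ * M)⁻¹ * Mᵀ)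
    (hG : G = (Mᵀ * M)⁻¹ * Mᵀ) :
    (G * Gᵀ - H * Hᵀ).PosSemidef ∧
    (∑ i, ∑ j, (H i j) ^ 2) ≤ (∑ i, ∑ j, (G i j) ^ 2) ∧
    ‖H‖ ≤ ‖G‖ ∧ ‖G‖ = 1 / σd := by
  set A := Mᵀ * M
  set K := 1 - (1 - (lam / n) • A) ^ t
  have hA : IsSelfAdjoint A := isHermitian_transpose_mul_self M
  have hG' : G = leftPinv M := hG
  have hGG : G * Gᵀ = A⁻¹ := hG' ▸ leftPinv_mul_transpose_leftPinv hM
  have hK : Kᵀ = K := by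
    simp only [K, transpose_sub, transpose_one, transpose_pow, transpose_smul,
      (isHermitian_iff_isSymm.mp hA).eq]
  have hHH : H * Hᵀ = K * A⁻¹ * K := by
    rw [hH, Matrix.mul_assoc K, ← hG, transpose_mul, hK, Matrix.mul_assoc, ← Matrix.mul_assoc G,
      hGG, Matrix.mul_assoc]
  have hspec := spectrum_transpose_mul_self_subset_Icc M hσd.le hbound
  have hPSD : (G * Gᵀ - H * Hᵀ).PosSemidef := by
    rw [hGG, hHH]
    refine posSemidef_inv_sub_mul_inv_mul hA (by positivity) (fun x hx => ⟨?_, ?_⟩) t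
    · exact lt_of_lt_of_le (by positivity) (hspec hx).1
    · exact (mul_le_mul_of_nonneg_left (hspec hx).2 (by positivity)).trans hstep
  refine ⟨hPSD, ?_, l2_opNorm_le_of_mul_transpose_le (le_iff.mpr hPSD), ?_⟩
  · rw [← trace_mul_transpose_self, ← trace_mul_transpose_self, ← sub_nonneg, ← trace_sub]
    exact hPSD.trace_nonneg
  · obtain ⟨v, hv, hMv⟩ := hattain
    rw [one_div, hG']
    exact le_antisymm (l2_opNorm_leftPinv_le hM hσd fun v => (hbound v).1)
      (inv_le_l2_opNorm_of_mul_eq_one (leftPinv_mul_self hM) hσd hv hMv)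

/-- For `M` of full column rank (`n > d`) with singular values
`σ₁ ≥ … ≥ σ_d > 0`, and `H = [I − (I − (λ/n)MᵀM)ᵗ](MᵀM)⁻¹Mᵀ` with
`(λ/n)σ₁² ≤ 1`, every singular value of `H` is at most the corresponding one of
`G = (MᵀM)⁻¹Mᵀ` (stated in Loewner form `HHᵀ ⪯ GGᵀ`); in particular
`‖H‖_F ≤ ‖G‖_F` and `‖H‖ ≤ ‖G‖ = 1/σ_d`. -/
theorem gd_H_singular_value_bounds {n d : ℕ} (hnd : n > d) (hn : 0 < n)
    (M : Matrix (Fin n) (Fin d) ℝ) (hM : IsUnit (Mᵀ * M))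
    (σ₁ σd : ℝ) (hσd : 0 < σd)
    (hbound : ∀ v : Fin d → ℝ,
      σd * ‖(WithLp.equiv 2 (Fin d → ℝ)).symm v‖ ≤
        ‖(WithLp.equiv 2 (Fin n → ℝ)).symm (M *ᵥ v)‖ ∧
      ‖(WithLp.equiv 2 (Fin n → ℝ)).symm (M *ᵥ v)‖ ≤
        σ₁ * ‖(WithLp.equiv 2 (Fin d → ℝ)).symm v‖)
    (hattain : ∃ v : Fin d → ℝ, v ≠ 0 ∧
      ‖(WithLp.equiv 2 (Fin n → ℝ)).symm (M *ᵥ v)‖ =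
        σd * ‖(WithLp.equiv 2 (Fin d → ℝ)).symm v‖)
    (lam : ℝ) (hlam : 0 < lam) (hstep : lam / n * σ₁ ^ 2 ≤ 1) (t : ℕ)
    (H G : Matrix (Fin d) (Fin n) ℝ)
    (hH : H = (1 - (1 - (lam / n) • (Mᵀ * M)) ^ t) * (Mᵀ * M)⁻¹ * Mᵀ)
    (hG : G = (Mᵀ * M)⁻¹ * Mᵀ) :
    (G * Gᵀ - H * Hᵀ).PosSemidef ∧
    (∑ i, ∑ j, (H i j) ^ 2) ≤ (∑ i, ∑ j, (G i j) ^ 2) ∧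
    ‖H‖ ≤ ‖G‖ ∧ ‖G‖ = 1 / σd :=
  gd_H_singular_value_bounds_general M hM σ₁ σd hσd hbound hattain lam hlam hstep t H G hH hG
end
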